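/- Let D be a canonical DBM over n clocks. Then the zone of the delay matrix D↑ is exactly the set of time-successors of the zone of D: ⟦D↑⟧ = {w : Fin (n+1) → ℝ | w 0 = 0 ∧ ∃ v ∈ ⟦D⟧, ∃ t ≥ 0, ∀ i ≠ 0, w i = v i + t}. -/

import Mathlib

/-- A DBM over `n` clocks: index `0` is the reference clock. -/
abbrev DBM (n : ℕ) := Fin (n + 1) → Fin (n + 1) → WithTop ℝ

/-- The zone of a DBM. -/
def Zone {n : ℕ} (D : DBM n) : Set (Fin (n + 1) → ℝ) :=
  {v | v 0 = 0 ∧ ∀ i j, ((v i - v j : ℝ) : WithTop ℝ) ≤ D i j}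

/-- A DBM is canonical if it satisfies the triangle inequality. -/
def Canonical {n : ℕ} (D : DBM n) : Prop :=
  ∀ i j k, D i j ≤ D i k + D k j

/-- The delay (time-elapse) matrix `D↑`: entries `(i, 0)` for `i ≠ 0` become `⊤`,
all other entries are unchanged. -/
def delay {n : ℕ} (D : DBM n) : DBM n :=
  fun i j => if i ≠ 0 ∧ j = 0 then ⊤ else D i j

/-!
A valuation `w ∈ ⟦D↑⟧` is moved back in time by the least delay `t ≥ 0` for which
`w i - t ≤ D i 0` for every clock `i`. The remaining constraints `t - w j ≤ D 0 j` hold because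
each `w j + D 0 j` is itself such a delay: `w i - w j ≤ D i j ≤ D i 0 + D 0 j` by canonicity.
Conversely, letting time elapse only loosens the constraints `v i - v j ≤ D i j` with `i = 0`
or `j ≠ 0`, which are the ones `D↑` keeps.
-/

theorem WithTop.coe_sub_le_iff_coe_le_add {a b : ℝ} {d : WithTop ℝ} :
    ((a - b : ℝ) : WithTop ℝ) ≤ d ↔ (a : WithTop ℝ) ≤ d + b := by
  cases d with
  | top => simp
  | coe d => norm_cast; exact sub_le_iff_le_add

theorem WithTop.exists_isLeast_nonneg_forall_coe_sub_le {ι : Type*} [Finite ι]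
    (x : ι → ℝ) (d : ι → WithTop ℝ) :
    ∃ t, IsLeast {s : ℝ | 0 ≤ s ∧ ∀ i, ((x i - s : ℝ) : WithTop ℝ) ≤ d i} t := by
  let bound : ι → ℝ := fun i =>
    match d i with
    -- an infinite bound imposes nothing beyond `0 ≤ s`
    | ⊤ => 0
    | (e : ℝ) => x i - e
  have bound_le_iff :
      ∀ i {s : ℝ}, 0 ≤ s → (bound i ≤ s ↔ ((x i - s : ℝ) : WithTop ℝ) ≤ d i) := by
    intro i s hs
    cases hd : d i with
    | top => simp [bound, hd, hs]
    | coe e => simp only [bound, hd, WithTop.coe_le_coe]; constructor <;> intro <;> linarith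
  refine ⟨max 0 (⨆ i, bound i), ⟨le_max_left _ _, fun i => ?_⟩, fun s ⟨hs, hsd⟩ => ?_⟩
  · refine (bound_le_iff i (le_max_left _ _)).1 ?_
    exact (le_ciSup (Finite.bddAbove_range bound) i).trans (le_max_right _ _)
  · exact max_le hs (Real.iSup_le (fun i => (bound_le_iff i hs).2 (hsd i)) hs)

section DelayZone

variable {n : ℕ}

theorem delay_apply_of_eq_zero_or_ne_zero (D : DBM n) {i j : Fin (n + 1)}
    (hij : i = 0 ∨ j ≠ 0) :
    delay D i j = D i j :=
  if_neg (by tauto)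

theorem sub_le_sub_of_time_successor {v w : Fin (n + 1) → ℝ} {t : ℝ} (hv0 : v 0 = 0)
    (hw0 : w 0 = 0) (ht : 0 ≤ t) (hwv : ∀ i, i ≠ 0 → w i = v i + t) {i j : Fin (n + 1)}
    (hij : i = 0 ∨ j ≠ 0) : w i - w j ≤ v i - v j := by
  rcases hij with rfl | hj
  · by_cases hj : j = 0
    · simp [hj]
    · rw [hwv j hj, hw0, hv0]; linarith
  · by_cases hi : i = 0
    · rw [hi, hwv j hj, hw0, hv0]; linarith
    · rw [hwv i hi, hwv j hj]; linarith

theorem mem_zone_delay_of_time_successor {D : DBM n} {v w : Fin (n + 1) → ℝ} {t : ℝ}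
    (hv : v ∈ Zone D) (hw0 : w 0 = 0) (ht : 0 ≤ t) (hwv : ∀ i, i ≠ 0 → w i = v i + t) :
    w ∈ Zone (delay D) := by
  refine ⟨hw0, fun i j => ?_⟩
  by_cases hij : i = 0 ∨ j ≠ 0
  · rw [delay_apply_of_eq_zero_or_ne_zero D hij]
    have hle := sub_le_sub_of_time_successor hv.1 hw0 ht hwv hij
    exact (WithTop.coe_le_coe.2 hle).trans (hv.2 i j)
  · rw [delay, if_pos (by tauto)]
    exact le_top

def backDelays (D : DBM n) (w : Fin (n + 1) → ℝ) : Set ℝ :=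
  {s | 0 ≤ s ∧ ∀ i, ((w i - s : ℝ) : WithTop ℝ) ≤ D i 0}

theorem exists_isLeast_backDelays (D : DBM n) (w : Fin (n + 1) → ℝ) :
    ∃ t, IsLeast (backDelays D w) t :=
  WithTop.exists_isLeast_nonneg_forall_coe_sub_le w (D · 0)

theorem add_mem_backDelays {D : DBM n} (hD : Canonical D) {w : Fin (n + 1) → ℝ}
    (hw : w ∈ Zone (delay D)) {j : Fin (n + 1)} (hj : j ≠ 0) {e : ℝ} (he : D 0 j = e) :
    w j + e ∈ backDelays D w := by
  have hw0j := hw.2 0 j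
  rw [delay_apply_of_eq_zero_or_ne_zero D (.inl rfl), he, hw.1, WithTop.coe_le_coe] at hw0j
  refine ⟨by linarith, fun i => WithTop.coe_sub_le_iff_coe_le_add.2 ?_⟩
  have hwij := hw.2 i j
  rw [delay_apply_of_eq_zero_or_ne_zero D (.inr hj)] at hwij
  calc ((w i : ℝ) : WithTop ℝ) ≤ D i j + w j := WithTop.coe_sub_le_iff_coe_le_add.1 hwij
    _ ≤ D i 0 + D 0 j + w j := by gcongr; exact hD i j 0
    _ = D i 0 + ((w j + e : ℝ) : WithTop ℝ) := by
        rw [he, add_assoc, ← WithTop.coe_add, add_comm e]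

theorem time_predecessor_mem_zone {D : DBM n} (hD : Canonical D) {w : Fin (n + 1) → ℝ}
    (hw : w ∈ Zone (delay D)) {t : ℝ} (ht : IsLeast (backDelays D w) t) :
    (fun i => if i = 0 then 0 else w i - t) ∈ Zone D := by
  refine ⟨if_pos rfl, fun i j => ?_⟩
  by_cases hi : i = 0 <;> by_cases hj : j = 0
  · simpa [hi, hj, delay] using hw.2 0 0
  · simp only [hi, hj, if_true, if_false, zero_sub]
    cases he : D 0 j with
    | top => exact le_top
    | coe e =>
      have ht_le := ht.2 (add_mem_backDelays hD hw hj he)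
      exact WithTop.coe_le_coe.2 (by linarith)
  · simpa [hi, hj] using ht.1.2 i
  · simpa [hi, hj, delay_apply_of_eq_zero_or_ne_zero D (.inr hj)] using hw.2 i j

end DelayZone

/-- for a canonical DBM `D`, the zone of the delay matrix `D↑` is exactly
the set of time-successors of the zone of `D`. -/
theorem zone_delay_eq_time_successors {n : ℕ} (D : DBM n) (hD : Canonical D) :
    Zone (delay D) =
      {w : Fin (n + 1) → ℝ | w 0 = 0 ∧
        ∃ v ∈ Zone D, ∃ t : ℝ, 0 ≤ t ∧ ∀ i, i ≠ 0 → w i = v i + t} := by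
  ext w
  constructor
  · intro hw
    obtain ⟨t, ht⟩ := exists_isLeast_backDelays D w
    exact ⟨hw.1, _, time_predecessor_mem_zone hD hw ht, t, ht.1.1, fun i hi => by simp [hi]⟩
  · rintro ⟨hw0, v, hv, t, ht, hwv⟩
    exact mem_zone_delay_of_time_successor hv hw0 ht hwv
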